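/- For the matrix W(r) = I₃ − ((1 − cos‖r‖)/‖r‖²) r̂ + ((‖r‖ − sin‖r‖)/‖r‖³) r̂², with r ∈ ℝ³, 0 < ‖r‖ < 2π, and r̂ the skew-symmetric hat of r, W(r) is invertible. -/

import Mathlib

open Matrix

/-- The skew-symmetric hat map `ℝ³ → so(3)`, with `hat r · v = r × v`. -/
def hat (r : Fin 3 → ℝ) : Matrix (Fin 3) (Fin 3) ℝ :=
  !![0, -r 2, r 1; r 2, 0, -r 0; -r 1, r 0, 0]

/-- The Euclidean norm of a vector in `ℝ³`. -/
noncomputable def enorm3 (r : Fin 3 → ℝ) : ℝ :=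
  ‖(WithLp.equiv 2 (Fin 3 → ℝ)).symm r‖

lemma det_formula (r : Fin 3 → ℝ) (a b : ℝ) :
    (1 - a • hat r + b • (hat r * hat r)).det =
      (1 - b * (r 0 ^ 2 + r 1 ^ 2 + r 2 ^ 2)) ^ 2
        + a ^ 2 * (r 0 ^ 2 + r 1 ^ 2 + r 2 ^ 2) := by
  simp [hat, Matrix.det_fin_three, Matrix.mul_apply, Fin.sum_univ_three,
    Matrix.one_apply]
  ring

lemma enorm3_sq (r : Fin 3 → ℝ) :
    (enorm3 r) ^ 2 = r 0 ^ 2 + r 1 ^ 2 + r 2 ^ 2 := by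
  rw [enorm3, EuclideanSpace.norm_eq, Real.sq_sqrt]
  · simp [Fin.sum_univ_three, PiLp.toLp_apply, sq_abs]
  · positivity

/-- For `0 < ‖r‖ < 2π`, the matrix
`W(r) = I₃ − ((1 − cos‖r‖)/‖r‖²) r̂ + ((‖r‖ − sin‖r‖)/‖r‖³) r̂²` is invertible. -/
theorem W_invertible
    (r : Fin 3 → ℝ) (h0 : 0 < enorm3 r) (h2π : enorm3 r < 2 * Real.pi)
    (W : Matrix (Fin 3) (Fin 3) ℝ)
    (hW : W = 1 - ((1 - Real.cos (enorm3 r)) / (enorm3 r) ^ 2) • hat r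
        + ((enorm3 r - Real.sin (enorm3 r)) / (enorm3 r) ^ 3) • (hat r * hat r)) :
    IsUnit W.det := by
  set θ := enorm3 r with hθ
  have hθ2 := enorm3_sq r
  rw [← hθ] at hθ2
  have hθne : θ ≠ 0 := ne_of_gt h0
  have hdet : W.det = (Real.sin θ / θ) ^ 2 + ((1 - Real.cos θ) / θ) ^ 2 := by
    rw [hW, det_formula, ← hθ2]
    field_simp
    ring
  have hcos : Real.cos θ < 1 := by
    rcases lt_or_eq_of_le (Real.cos_le_one θ) with h | h
    · exact h
    · exfalso
      have := (Real.cos_eq_one_iff_of_lt_of_lt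
        (by linarith [Real.two_pi_pos] : -(2 * Real.pi) < θ) h2π).1 h
      exact hθne this
  have hpos : 0 < W.det := by
    rw [hdet]
    have : 0 < ((1 - Real.cos θ) / θ) ^ 2 := pow_pos (div_pos (by linarith) h0) 2
    nlinarith [sq_nonneg (Real.sin θ / θ)]
  exact isUnit_iff_ne_zero.2 (ne_of_gt hpos)
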